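/- Let x₀,…,x_N obey a forward Markov model with parameters M_{k,k-1}, M_k (M_k positive definite). Define e^R₀ = M₀⁻¹ e^M₀ - M₁,₀' M₁⁻¹ e^M₁, e^R_k = M_k⁻¹ e^M_k - M_{k+1,k}' M_{k+1}⁻¹ e^M_{k+1} for k ∈ [1,N-1], and e^R_N = M_N⁻¹ e^M_N. Then for k ∈ [1,N-1]: (M_k⁻¹ + M_{k+1,k}' M_{k+1}⁻¹ M_{k+1,k}) x_k - M_k⁻¹ M_{k,k-1} x_{k-1} - M_{k+1,k}' M_{k+1}⁻¹ x_{k+1} = e^R_k; i.e., the sequence satisfies the reciprocal model R⁰_k x_k - R⁻_k x_{k-1} - R⁺_k x_{k+1} = e^R_k with R⁰_k = M_k⁻¹ + M_{k+1,k}' M_{k+1}⁻¹ M_{k+1,k}, R⁻_k = M_k⁻¹ M_{k,k-1}, R⁺_k = M_{k+1,k}' M_{k+1}⁻¹. -/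
import Mathlib


open Matrix MeasureTheory

/-- Square `d × d` real matrices (one block). -/
abbrev SqMat (d : ℕ) := Matrix (Fin d) (Fin d) ℝ

/-- Big `(N+1)d × (N+1)d` real matrices, viewed as `(N+1) × (N+1)` arrays of
`d × d` blocks. -/
abbrev BigMat (N d : ℕ) := Matrix (Fin (N+1) × Fin d) (Fin (N+1) × Fin d) ℝ

/-- The `(i,j)` block of a big matrix. -/
def blk {N d : ℕ} (A : BigMat N d) (i j : Fin (N+1)) : SqMat d :=
  fun a b => A (i, a) (j, b)

/-- Block diagonal big matrix with diagonal blocks `D 0, …, D N`. -/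
def bdiag (N d : ℕ) (D : ℕ → SqMat d) : BigMat N d :=
  fun p q => if (p.1 : ℕ) = (q.1 : ℕ) then D (p.1 : ℕ) p.2 q.2 else 0

/-- The block lower bidiagonal matrix `𝓜` of a forward Markov model: identity blocks
on the diagonal and block `-(T k) = -M_{k,k-1}` in position `(k, k-1)` for `k ∈ [1,N]`. -/
def lowerBidiag (N d : ℕ) (T : ℕ → SqMat d) : BigMat N d :=
  fun p q =>
    if (p.1 : ℕ) = (q.1 : ℕ) then (if p.2 = q.2 then 1 else 0)
    else if (q.1 : ℕ) + 1 = (p.1 : ℕ) then -(T (p.1 : ℕ) p.2 q.2) else 0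

/-- The block upper bidiagonal matrix `𝓜ᴮ` of a backward Markov model: identity blocks
on the diagonal and block `-(T k) = -Mᴮ_{k,k+1}` in position `(k, k+1)` for `k ∈ [0,N-1]`. -/
def upperBidiag (N d : ℕ) (T : ℕ → SqMat d) : BigMat N d :=
  fun p q =>
    if (p.1 : ℕ) = (q.1 : ℕ) then (if p.2 = q.2 then 1 else 0)
    else if (p.1 : ℕ) + 1 = (q.1 : ℕ) then -(T (p.1 : ℕ) p.2 q.2) else 0

/-- a sequence obeying a forward Markov model
`x_k = M_{k,k-1} x_{k-1} + eᴹ_k` also satisfies the reciprocal model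
`R⁰_k x_k - R⁻_k x_{k-1} - R⁺_k x_{k+1} = eᴿ_k` for `k ∈ [1,N-1]`, where
`R⁰_k = M_k⁻¹ + M_{k+1,k}ᵀ M_{k+1}⁻¹ M_{k+1,k}`, `R⁻_k = M_k⁻¹ M_{k,k-1}`,
`R⁺_k = M_{k+1,k}ᵀ M_{k+1}⁻¹`, and
`eᴿ_k = M_k⁻¹ eᴹ_k - M_{k+1,k}ᵀ M_{k+1}⁻¹ eᴹ_{k+1}` (with
`eᴿ₀ = M₀⁻¹ eᴹ₀ - M₁,₀ᵀ M₁⁻¹ eᴹ₁` and `eᴿ_N = M_N⁻¹ eᴹ_N`). -/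
theorem markov_satisfies_reciprocal_model {N d : ℕ} (Tr M : ℕ → SqMat d)
    (hM : ∀ k ≤ N, (M k).PosDef)
    (x eM eR : ℕ → Fin d → ℝ)
    (hx0 : x 0 = eM 0)
    (hmodel : ∀ k, 1 ≤ k → k ≤ N → x k = (Tr k).mulVec (x (k-1)) + eM k)
    (heR0 : eR 0 = ((M 0)⁻¹).mulVec (eM 0) - ((Tr 1)ᵀ * (M 1)⁻¹).mulVec (eM 1))
    (heR : ∀ k, 1 ≤ k → k ≤ N - 1 →
      eR k = ((M k)⁻¹).mulVec (eM k) - ((Tr (k+1))ᵀ * (M (k+1))⁻¹).mulVec (eM (k+1)))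
    (heRN : eR N = ((M N)⁻¹).mulVec (eM N)) :
    ∀ k, 1 ≤ k → k ≤ N - 1 →
      ((M k)⁻¹ + (Tr (k+1))ᵀ * (M (k+1))⁻¹ * Tr (k+1)).mulVec (x k)
        - ((M k)⁻¹ * Tr k).mulVec (x (k-1))
        - ((Tr (k+1))ᵀ * (M (k+1))⁻¹).mulVec (x (k+1)) = eR k := by
  intro k hk1 hkN
  have hN2 : 2 ≤ N := by omega
  have hkN' : k ≤ N := by omega
  have hk1N : k + 1 ≤ N := by omega
  have hxk : x k = (Tr k).mulVec (x (k-1)) + eM k := hmodel k hk1 hkN'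
  have hxk1 : x (k+1) = (Tr (k+1)).mulVec (x k) + eM (k+1) := by
    have := hmodel (k+1) (by omega) hk1N
    simpa using this
  rw [heR k hk1 hkN, hxk1]
  have hek : eM k = x k - (Tr k).mulVec (x (k-1)) := by rw [hxk]; abel
  rw [hek]
  simp only [Matrix.add_mulVec, Matrix.mulVec_add, Matrix.mulVec_sub,
    ← Matrix.mulVec_mulVec]
  abel
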